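/- arXiv:2508.10961 — 3 statements merged into one kernel-verified Lean document; each statement's English description precedes it below -/
import Mathlib

section
/- Normal magic hexagons exist only for orders 1 and 3: if n ≥ 1 and there exists a magic hexagon x : H_n → ℤ of order n (with some magic sum M) whose entries are exactly the integers 1 through 3n²−3n+1, each used once, then n = 1 or n = 3. -/
/-- The order-`n` hexagonal board: triples `(a,b,c)` of integers with
`a + b + c = 0` and `|a|, |b|, |c| ≤ n - 1`. -/
noncomputable def hexBoard (n : ℕ) : Finset (ℤ × ℤ × ℤ) :=
  ((Finset.Icc (-(n:ℤ) + 1) ((n:ℤ) - 1)) ×ˢ (Finset.Icc (-(n:ℤ) + 1) ((n:ℤ) - 1)) ×ˢ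
      (Finset.Icc (-(n:ℤ) + 1) ((n:ℤ) - 1))).filter
    (fun p => p.1 + p.2.1 + p.2.2 = 0)

/-- The `k`-th coordinate of a cell. -/
def hexCoord : Fin 3 → ℤ × ℤ × ℤ → ℤ
  | 0, p => p.1
  | 1, p => p.2.1
  | 2, p => p.2.2

/-- The line of the order-`n` board consisting of the cells whose `k`-th
coordinate equals `v`. -/
noncomputable def hexLine (n : ℕ) (k : Fin 3) (v : ℤ) : Finset (ℤ × ℤ × ℤ) :=
  (hexBoard n).filter (fun p => hexCoord k p = v)

/-- `x` is a magic hexagon of order `n` with magic sum `M`: the sum of `x` over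
every line of the order-`n` board equals `M`. -/
def IsMagicHexagon (n : ℕ) (x : ℤ × ℤ × ℤ → ℤ) (M : ℤ) : Prop :=
  ∀ k : Fin 3, ∀ v : ℤ, |v| ≤ (n:ℤ) - 1 → ∑ p ∈ hexLine n k v, x p = M

/-!
Summing the entries line by line over the `2n - 1` parallel lines of one direction gives
`(2n - 1) M = 1 + 2 + ⋯ + N = N (N + 1) / 2` with `N = 3n² - 3n + 1`, so `2n - 1 ∣ N (N + 1)`.
Since `2n ≡ 1` modulo `2n - 1`, we get `4N ≡ 1` and `4(N + 1) ≡ 5`, hence `2n - 1 ∣ 5`,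
which leaves only `n = 1` and `n = 3`.
-/

lemma hexCoord_mem_Icc_of_mem_hexBoard {n : ℕ} {p : ℤ × ℤ × ℤ} (hp : p ∈ hexBoard n)
    (k : Fin 3) : hexCoord k p ∈ Finset.Icc (-(n:ℤ) + 1) ((n:ℤ) - 1) := by
  simp only [hexBoard, Finset.mem_filter, Finset.mem_product] at hp
  fin_cases k
  exacts [hp.1.1, hp.1.2.1, hp.1.2.2]

lemma sum_hexBoard_eq_sum_hexLine (n : ℕ) (k : Fin 3) (f : ℤ × ℤ × ℤ → ℤ) :
    ∑ p ∈ hexBoard n, f p =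
      ∑ v ∈ Finset.Icc (-(n:ℤ) + 1) ((n:ℤ) - 1), ∑ p ∈ hexLine n k v, f p :=
  (Finset.sum_fiberwise_of_maps_to
    (fun _ hp => hexCoord_mem_Icc_of_mem_hexBoard hp k) f).symm

lemma IsMagicHexagon.sum_hexBoard {n : ℕ} {x : ℤ × ℤ × ℤ → ℤ} {M : ℤ}
    (hmagic : IsMagicHexagon n x M) (hn : 1 ≤ n) :
    ∑ p ∈ hexBoard n, x p = (2 * n - 1) * M := by
  have hline : ∀ v ∈ Finset.Icc (-(n:ℤ) + 1) ((n:ℤ) - 1), ∑ p ∈ hexLine n 0 v, x p = M :=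
    fun v hv => hmagic 0 v (abs_le.mpr (by rw [Finset.mem_Icc] at hv; omega))
  have hcard : ((Finset.Icc (-(n:ℤ) + 1) ((n:ℤ) - 1)).card : ℤ) = 2 * n - 1 := by
    rw [Int.card_Icc]; omega
  rw [sum_hexBoard_eq_sum_hexLine n 0, Finset.sum_congr rfl hline, Finset.sum_const,
    nsmul_eq_mul, hcard]

lemma sum_eq_sum_Icc_of_bijOn {ι : Type*} {s : Finset ι} {f : ι → ℤ} {a b : ℤ}
    (hf : Set.BijOn f s (Set.Icc a b)) : ∑ i ∈ s, f i = ∑ k ∈ Finset.Icc a b, k := by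
  rw [← Finset.coe_Icc] at hf
  exact Finset.sum_nbij f (fun _ hi => hf.mapsTo hi) hf.injOn hf.surjOn (fun _ _ => rfl)

lemma two_mul_sum_Icc_one (N : ℤ) (hN : 0 ≤ N) :
    2 * ∑ k ∈ Finset.Icc 1 N, k = N * (N + 1) := by
  induction N, hN using Int.leInduction with
  | base => simp
  | succ N hN ih =>
    rw [← Finset.insert_Icc_right_eq_Icc_add_one (by omega),
      Finset.sum_insert (by simp), mul_add, ih]
    ring

lemma two_mul_sub_one_dvd_five_of_dvd (n : ℤ)
    (h : 2 * n - 1 ∣ (3 * n ^ 2 - 3 * n + 1) * (3 * n ^ 2 - 3 * n + 2)) : 2 * n - 1 ∣ 5 := by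
  have h5 : (5 : ℤ) = 16 * ((3 * n ^ 2 - 3 * n + 1) * (3 * n ^ 2 - 3 * n + 2)) -
      (2 * n - 1) * (72 * n ^ 3 - 108 * n ^ 2 + 90 * n - 27) := by ring
  rw [h5]
  exact dvd_sub (dvd_mul_of_dvd_right h 16) (dvd_mul_right _ _)

lemma eq_one_or_three_of_two_mul_sub_one_dvd_five {n : ℕ} (hn : 1 ≤ n)
    (h : 2 * (n : ℤ) - 1 ∣ 5) : n = 1 ∨ n = 3 := by
  have hle : n ≤ 3 := by have := Int.le_of_dvd (by norm_num) h; omega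
  interval_cases n <;> simp_all

/-- Normal magic hexagons exist only for orders `1` and `3`. -/
theorem normal_magic_hexagon_only_orders_one_three (n : ℕ) (hn : 1 ≤ n)
    (x : ℤ × ℤ × ℤ → ℤ) (M : ℤ)
    (hbij : Set.BijOn x ↑(hexBoard n) (Set.Icc (1 : ℤ) (3 * (n:ℤ)^2 - 3 * (n:ℤ) + 1)))
    (hmagic : IsMagicHexagon n x M) :
    n = 1 ∨ n = 3 := by
  have hsum := hmagic.sum_hexBoard hn
  rw [sum_eq_sum_Icc_of_bijOn hbij] at hsum
  have hdvd : 2 * (n : ℤ) - 1 ∣ (3 * n ^ 2 - 3 * n + 1) * (3 * n ^ 2 - 3 * n + 2) := by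
    have hN : 0 ≤ 3 * (n : ℤ) ^ 2 - 3 * n + 1 := by nlinarith
    exact ⟨2 * M, by linear_combination -two_mul_sum_Icc_one _ hN + 2 * hsum⟩
  exact eq_one_or_three_of_two_mul_sub_one_dvd_five hn (two_mul_sub_one_dvd_five_of_dvd n hdvd)
end

section
/- There exists a magic hexagon of order 3 with magic sum 0 whose 19 integer entries are pairwise distinct. -/
/-!
If `x` is odd with respect to the central symmetry `p ↦ -p` of the board, then this symmetry
maps the line `(k, v)` onto the line `(k, -v)`, so the sums over these two lines are opposite
and the sum over each central line `(k, 0)` vanishes. An odd function is therefore a magic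
hexagon with magic sum `0` as soon as the lines with `v > 0` sum to `0`, and on the order-3
board the integers `-9, …, 9` can be arranged in this way.
-/

section HexBoard

variable {n : ℕ}

lemma hexCoord_neg (k : Fin 3) (p : ℤ × ℤ × ℤ) : hexCoord k (-p) = -hexCoord k p := by
  fin_cases k <;> rfl

lemma neg_mem_hexBoard {p : ℤ × ℤ × ℤ} (hp : p ∈ hexBoard n) : -p ∈ hexBoard n := by
  simp only [hexBoard, Finset.mem_filter, Finset.mem_product, Finset.mem_Icc,
    Prod.fst_neg, Prod.snd_neg] at hp ⊢
  omega

lemma neg_mem_hexLine {k : Fin 3} {v : ℤ} {p : ℤ × ℤ × ℤ} (hp : p ∈ hexLine n k v) :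
    -p ∈ hexLine n k (-v) := by
  rw [hexLine, Finset.mem_filter] at hp ⊢
  exact ⟨neg_mem_hexBoard hp.1, by rw [hexCoord_neg, hp.2]⟩

variable {x : ℤ × ℤ × ℤ → ℤ}

lemma sum_hexLine_neg_of_odd (hx : ∀ p ∈ hexBoard n, x (-p) = -x p) (k : Fin 3) (v : ℤ) :
    ∑ p ∈ hexLine n k (-v), x p = -∑ p ∈ hexLine n k v, x p := by
  rw [← Finset.sum_neg_distrib]
  refine Finset.sum_nbij' Neg.neg Neg.neg (fun p hp => by simpa using neg_mem_hexLine hp)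
    (fun p hp => neg_mem_hexLine hp) (fun p _ => neg_neg p) (fun p _ => neg_neg p) fun p hp => ?_
  rw [← hx (-p) (Finset.mem_filter.mp (neg_mem_hexLine hp)).1, neg_neg]

lemma sum_hexLine_zero_of_odd (hx : ∀ p ∈ hexBoard n, x (-p) = -x p) (k : Fin 3) :
    ∑ p ∈ hexLine n k 0, x p = 0 := by
  have h := sum_hexLine_neg_of_odd hx k 0
  rw [neg_zero] at h
  omega

theorem isMagicHexagon_zero_of_odd (hx : ∀ p ∈ hexBoard n, x (-p) = -x p)
    (hline : ∀ k : Fin 3, ∀ v ∈ Finset.Icc 1 ((n : ℤ) - 1), ∑ p ∈ hexLine n k v, x p = 0) :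
    IsMagicHexagon n x 0 := by
  intro k v hv
  rcases lt_trichotomy v 0 with hv_neg | rfl | hv_pos
  · rw [← neg_neg v, sum_hexLine_neg_of_odd hx, neg_eq_zero]
    exact hline k (-v) (Finset.mem_Icc.mpr ⟨by omega, (neg_le_abs v).trans hv⟩)
  · exact sum_hexLine_zero_of_odd hx k
  · exact hline k v (Finset.mem_Icc.mpr ⟨hv_pos, (le_abs_self v).trans hv⟩)

end HexBoard

def magicHexThree : ℤ × ℤ × ℤ → ℤ
  | (0, 0, 0) => 0
  | (-2, 0, 2) => -9
  | (2, 0, -2) => 9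
  | (-2, 1, 1) => 1
  | (2, -1, -1) => -1
  | (-2, 2, 0) => 8
  | (2, -2, 0) => -8
  | (-1, -1, 2) => 3
  | (1, 1, -2) => -3
  | (-1, 0, 1) => 4
  | (1, 0, -1) => -4
  | (-1, 1, 0) => -5
  | (1, -1, 0) => 5
  | (-1, 2, -1) => -2
  | (1, -2, 1) => 2
  | (0, -2, 2) => 6
  | (0, 2, -2) => -6
  | (0, -1, 1) => -7
  | (0, 1, -1) => 7
  | _ => 0

lemma magicHexThree_neg : ∀ p ∈ hexBoard 3, magicHexThree (-p) = -magicHexThree p := by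
  decide

lemma image_magicHexThree : (hexBoard 3).image magicHexThree = Finset.Icc (-9) 9 := by
  decide

lemma card_hexBoard_three : (hexBoard 3).card = 19 := by
  decide

lemma magicHexThree_injOn : Set.InjOn magicHexThree (hexBoard 3) :=
  Finset.injOn_of_card_image_eq <| by rw [image_magicHexThree, card_hexBoard_three]; rfl

lemma isMagicHexagon_magicHexThree : IsMagicHexagon 3 magicHexThree 0 :=
  isMagicHexagon_zero_of_odd magicHexThree_neg (by decide)

/-- There exists a magic hexagon of order `3` with magic sum `0` whose 19
entries are pairwise distinct. -/
theorem magic_hexagon_order_three_sum_zero :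
    ∃ x : ℤ × ℤ × ℤ → ℤ,
      Set.InjOn x ↑(hexBoard 3) ∧ IsMagicHexagon 3 x 0 :=
  ⟨magicHexThree, magicHexThree_injOn, isMagicHexagon_magicHexThree⟩
end

section
/- There exists a magic hexagon of order 5 with magic sum 244 whose entries are exactly the integers 6 through 66, each used once; that is, there is a bijection x from H_5 (which has 61 cells) onto {6, 7, …, 66} such that the sum of x over each of the 27 lines of H_5 equals 244. -/
/-- Reads a board of order `n` from its rows: row `i` lists, in increasing order of `b`, the
values on the cells with `a = i - (n - 1)`. -/
def hexOfRows (n : ℕ) (rows : List (List ℤ)) (p : ℤ × ℤ × ℤ) : ℤ :=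
  (rows.getD (p.1 + n - 1).toNat []).getD (p.2.1 + n - 1 + min p.1 0).toNat 0

theorem isMagicHexagon_iff_forall_mem_Icc (n : ℕ) (x : ℤ × ℤ × ℤ → ℤ) (M : ℤ) :
    IsMagicHexagon n x M ↔
      ∀ k : Fin 3, ∀ v ∈ Finset.Icc (1 - (n : ℤ)) (n - 1), ∑ p ∈ hexLine n k v, x p = M := by
  simp only [IsMagicHexagon, abs_le, Finset.mem_Icc, neg_sub]

def magicHexagonFive : ℤ × ℤ × ℤ → ℤ :=
  hexOfRows 5
    [[56, 43, 28, 54, 63],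
     [61, 42, 38, 19, 37, 47],
     [57, 24, 17, 30, 21, 29, 66],
     [45, 27, 32, 7, 8, 35, 40, 50],
     [25, 60, 58, 13, 6, 11, 33, 20, 18],
     [48, 9, 10, 22, 16, 26, 49, 64],
     [62, 46, 12, 14, 15, 36, 59],
     [65, 31, 39, 23, 34, 52],
     [44, 53, 41, 55, 51]]

theorem magicHexagonFive_bijOn :
    Set.BijOn magicHexagonFive ↑(hexBoard 5) (Set.Icc (6 : ℤ) 66) := by
  rw [← Finset.coe_Icc, ← Finset.image_eq_iff_bijOn_of_card (by decide)]
  decide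

theorem isMagicHexagon_magicHexagonFive : IsMagicHexagon 5 magicHexagonFive 244 := by
  rw [isMagicHexagon_iff_forall_mem_Icc]
  decide

/-- There is a magic hexagon of order `5` with magic sum `244` whose entries
are exactly the integers `6` through `66`. -/
theorem magic_hexagon_order_five :
    ∃ x : ℤ × ℤ × ℤ → ℤ,
      Set.BijOn x ↑(hexBoard 5) (Set.Icc (6 : ℤ) 66) ∧ IsMagicHexagon 5 x 244 :=
  ⟨magicHexagonFive, magicHexagonFive_bijOn, isMagicHexagon_magicHexagonFive⟩
end
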